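/- arXiv:2106.08358 — 4 statements merged into one kernel-verified Lean document; each statement's English description precedes it below -/
import Mathlib

section
/- Every derivation of a finite product Π_{i=1}^r M_{n_i}(ℂ) of complex matrix algebras is inner: for every ℂ-linear map X : Π_{i=1}^r M_{n_i}(ℂ) → Π_{i=1}^r M_{n_i}(ℂ) satisfying X(ab) = X(a)b + aX(b) for all a, b, there exists c ∈ Π_{i=1}^r M_{n_i}(ℂ) with X(a) = ca − ac for all a. -/
section helpers
variable {ι : Type*} [DecidableEq ι] {f : ι → Type*} [∀ i, MulZeroClass (f i)]

lemma pi_mul_single (a : ∀ i, f i) (i : ι) (M : f i) :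
    a * Pi.single i M = Pi.single i (a i * M) := by
  funext j
  rcases eq_or_ne j i with rfl | h
  · simp
  · simp [Pi.single_eq_of_ne h]

lemma pi_single_mul (a : ∀ i, f i) (i : ι) (M : f i) :
    Pi.single i M * a = Pi.single i (M * a i) := by
  funext j
  rcases eq_or_ne j i with rfl | h
  · simp
  · simp [Pi.single_eq_of_ne h]

lemma pi_single_mul_single (i : ι) (M N : f i) :
    Pi.single i M * Pi.single i N = Pi.single i (M * N) := by
  rw [pi_single_mul]; simp
end helpers

lemma pi_single_sum {ι : Type*} [DecidableEq ι] {f : ι → Type*} [∀ i, AddCommMonoid (f i)]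
    {κ : Type*} (s : Finset κ) (i : ι) (g : κ → f i) :
    ∑ k ∈ s, Pi.single i (g k) = Pi.single i (∑ k ∈ s, g k) :=
  (map_sum (AddMonoidHom.single f i) g s).symm

lemma sum_diag_units (N : ℕ) :
    ∑ k : Fin N, Matrix.single k k (1 : ℂ) = 1 := by
  ext p q
  rcases eq_or_ne p q with rfl | h
  · simp [Matrix.sum_apply, Matrix.single, Matrix.one_apply, Finset.sum_ite_eq, and_self]
  · have : ∀ k : Fin N, ¬(k = p ∧ k = q) := by rintro k ⟨rfl, rfl⟩; exact h rfl
    simp only [Matrix.sum_apply, Matrix.single, Matrix.of_apply]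
    rw [Finset.sum_eq_zero (fun k _ => if_neg (this k))]
    simp [Matrix.one_apply, h]

lemma mul_unit_expand {N : ℕ} (a : Matrix (Fin N) (Fin N) ℂ) (k j : Fin N) :
    a * Matrix.single k j 1 = ∑ m : Fin N, a m k • Matrix.single m j 1 := by
  ext p q
  simp [Matrix.sum_apply, Matrix.mul_apply, Matrix.single, Finset.sum_ite_eq,
    ite_and, mul_comm]

lemma unit_mul_expand {N : ℕ} (a : Matrix (Fin N) (Fin N) ℂ) (k j : Fin N) :
    Matrix.single j k 1 * a = ∑ m : Fin N, a k m • Matrix.single j m 1 := by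
  ext p q
  simp [Matrix.sum_apply, Matrix.mul_apply, Matrix.single, Finset.sum_ite_eq,
    ite_and]

/-- Every (ℂ-linear) derivation of a finite product of complex matrix
algebras `Π i, M_{n i}(ℂ)` is inner. -/
theorem derivation_matrix_pi_inner (r : ℕ) (n : Fin r → ℕ)
    (X : ((i : Fin r) → Matrix (Fin (n i)) (Fin (n i)) ℂ) →ₗ[ℂ]
         ((i : Fin r) → Matrix (Fin (n i)) (Fin (n i)) ℂ))
    (hX : ∀ a b : (i : Fin r) → Matrix (Fin (n i)) (Fin (n i)) ℂ,
      X (a * b) = X a * b + a * X b) :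
    ∃ c : (i : Fin r) → Matrix (Fin (n i)) (Fin (n i)) ℂ,
      ∀ a : (i : Fin r) → Matrix (Fin (n i)) (Fin (n i)) ℂ, X a = c * a - a * c := by
  classical
  set A := ((i : Fin r) → Matrix (Fin (n i)) (Fin (n i)) ℂ) with hA
  -- matrix units: u i k = E_{k,0}^{(i)}, v i k = E_{0,k}^{(i)}
  let z : ∀ i : Fin r, Fin (n i) → Fin (n i) := fun i k => ⟨0, k.pos⟩
  let u : ∀ i : Fin r, Fin (n i) → A := fun i k =>
    Pi.single i (Matrix.single k (z i k) 1)
  let v : ∀ i : Fin r, Fin (n i) → A := fun i k =>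
    Pi.single i (Matrix.single (z i k) k 1)
  have hz : ∀ i (k m : Fin (n i)), z i k = z i m := fun i k m => rfl
  -- the partition of unity
  have huv : ∑ i : Fin r, ∑ k : Fin (n i), u i k * v i k = (1 : A) := by
    have h1 : ∀ i : Fin r, ∑ k : Fin (n i), u i k * v i k
        = Pi.single i (1 : Matrix (Fin (n i)) (Fin (n i)) ℂ) := by
      intro i
      have : ∀ k : Fin (n i), u i k * v i k
          = Pi.single i (Matrix.single k k (1 : ℂ)) := by
        intro k
        rw [pi_single_mul_single, Matrix.single_mul_single_same, one_mul]
      rw [Finset.sum_congr rfl (fun k _ => this k), pi_single_sum, sum_diag_units]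
    rw [Finset.sum_congr rfl (fun i _ => h1 i)]
    exact Finset.univ_sum_single (fun _ => 1)
  -- expansion lemmas
  have hexp_u : ∀ (a : A) (i : Fin r) (k : Fin (n i)),
      a * u i k = ∑ m : Fin (n i), a i m k • u i m := by
    intro a i k
    show a * Pi.single i (Matrix.single k (z i k) 1) = _
    rw [pi_mul_single, mul_unit_expand, ← pi_single_sum]
    exact Finset.sum_congr rfl fun m _ => Pi.single_smul i _ _
  have hexp_v : ∀ (a : A) (i : Fin r) (k : Fin (n i)),
      v i k * a = ∑ m : Fin (n i), a i k m • v i m := by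
    intro a i k
    show Pi.single i (Matrix.single (z i k) k 1) * a = _
    rw [pi_single_mul, unit_mul_expand, ← pi_single_sum]
    exact Finset.sum_congr rfl fun m _ => Pi.single_smul i _ _
  -- the key symmetry lemma
  have hL : ∀ a : A, ∑ i : Fin r, ∑ k : Fin (n i), X (a * u i k) * v i k
      = ∑ i : Fin r, ∑ k : Fin (n i), X (u i k) * (v i k * a) := by
    intro a
    refine Finset.sum_congr rfl fun i _ => ?_
    have lhs : ∀ k : Fin (n i), X (a * u i k) * v i k
        = ∑ m : Fin (n i), a i m k • (X (u i m) * v i k) := by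
      intro k
      rw [hexp_u a i k, map_sum, Finset.sum_mul]
      exact Finset.sum_congr rfl fun m _ => by rw [map_smul, smul_mul_assoc]
    have rhs : ∀ k : Fin (n i), X (u i k) * (v i k * a)
        = ∑ m : Fin (n i), a i k m • (X (u i k) * v i m) := by
      intro k
      rw [hexp_v a i k, Finset.mul_sum]
      exact Finset.sum_congr rfl fun m _ => by rw [mul_smul_comm]
    rw [Finset.sum_congr rfl fun k _ => lhs k, Finset.sum_congr rfl fun k _ => rhs k]
    exact Finset.sum_comm
  -- the implementing element
  refine ⟨∑ i : Fin r, ∑ k : Fin (n i), X (u i k) * v i k, fun a => ?_⟩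
  have h2 : (∑ i : Fin r, ∑ k : Fin (n i), X (u i k) * v i k) * a
      = ∑ i : Fin r, ∑ k : Fin (n i), X (u i k) * (v i k * a) := by
    rw [Finset.sum_mul]
    exact Finset.sum_congr rfl fun i _ => by
      rw [Finset.sum_mul]
      exact Finset.sum_congr rfl fun k _ => mul_assoc _ _ _
  have h1 : a * (∑ i : Fin r, ∑ k : Fin (n i), X (u i k) * v i k)
      = (∑ i : Fin r, ∑ k : Fin (n i), X (a * u i k) * v i k) - X a := by
    rw [Finset.mul_sum]
    have : ∀ i : Fin r, a * (∑ k : Fin (n i), X (u i k) * v i k)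
        = ∑ k : Fin (n i), (X (a * u i k) * v i k - X a * (u i k * v i k)) := by
      intro i
      rw [Finset.mul_sum]
      refine Finset.sum_congr rfl fun k _ => ?_
      have := hX a (u i k)
      have ha : a * X (u i k) = X (a * u i k) - X a * u i k := by
        rw [this, add_sub_cancel_left]
      rw [← mul_assoc, ha, sub_mul, mul_assoc]
    rw [Finset.sum_congr rfl fun i _ => this i]
    have hsplit : ∀ i : Fin r,
        ∑ k : Fin (n i), (X (a * u i k) * v i k - X a * (u i k * v i k))
        = (∑ k : Fin (n i), X (a * u i k) * v i k)
          - X a * (∑ k : Fin (n i), u i k * v i k) := by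
      intro i
      rw [Finset.sum_sub_distrib, Finset.mul_sum]
    rw [Finset.sum_congr rfl fun i _ => hsplit i, Finset.sum_sub_distrib,
      ← Finset.mul_sum, huv, mul_one]
  rw [h2, h1, ← hL a]
  abel
end

section
/- Let (A_i)_{i∈I} be a finite family of unital associative ℂ-algebras, A = Π_{i∈I} A_i, and p ≥ 1. Let ω be a function assigning to each p-tuple (X_1,…,X_p) of derivations of A an element of A, which is antisymmetric (it changes sign under the transposition of any two arguments), additive in each argument, and satisfies ω(X_1,…,f•X_k,…,X_p) = f·ω(X_1,…,X_p) for every central element f ∈ Z(A) and every slot k, where f•X denotes the derivation a ↦ f·X(a). Then for every i ∈ I there exists a function ω_i on p-tuples of derivations of A_i, antisymmetric, additive in each argument, and satisfying ω_i(…, g•Y, …) = g·ω_i(…, Y, …) for every g ∈ Z(A_i), such that (ω(X_1,…,X_p))_i = ω_i((X_1)_i,…,(X_p)_i) for all derivations X_1,…,X_p of A, where (X)_i denotes the i-th component derivation of X, characterized by (X(a))_i = (X)_i(a_i) for all a ∈ A. -/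
def IsNCDerivation {A : Type*} [Ring A] [Algebra ℂ A] (X : A →ₗ[ℂ] A) : Prop :=
  ∀ a b : A, X (a * b) = X a * b + a * X b

/-!
Write `Ŷ` for the extension by zero of an endomorphism `Y` of `A i` to `A = Π j, A j`, and set
`ω_i(Y₁, …, Y_p) := ω(Ŷ₁, …, Ŷ_p)_i`. Extension by zero is additive, preserves derivations and
turns `g • Y` into `Pi.single i g • Ŷ` with `Pi.single i g` central, so `ω_i` inherits
antisymmetry, additivity and `Z(A_i)`-linearity from `ω`. For the compatibility, let the `X_k`
have components `Y_k = (X_k)_i`: then `e • X_k = Ŷ_k` for the central idempotent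
`e = Pi.single i 1`, so linearity over `e` in every slot gives
`ω(Ŷ₁, …, Ŷ_p) = e ^ p * ω(X₁, …, X_p)`, whose `i`-th component is `ω(X₁, …, X_p)_i`.
-/

open Function LinearMap

section Forms

variable {B : Type*} [Ring B] [Algebra ℂ B] {p : ℕ}

def IsAntisymmOnDerivations (ω : (Fin p → (B →ₗ[ℂ] B)) → B) : Prop :=
  ∀ X : Fin p → (B →ₗ[ℂ] B), (∀ k, IsNCDerivation (X k)) → ∀ k l : Fin p, k ≠ l →
    ω (fun t => X (Equiv.swap k l t)) = - ω X

def IsAdditiveOnDerivations (ω : (Fin p → (B →ₗ[ℂ] B)) → B) : Prop :=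
  ∀ X : Fin p → (B →ₗ[ℂ] B), (∀ k, IsNCDerivation (X k)) →
    ∀ (k : Fin p) (Y Z : B →ₗ[ℂ] B), IsNCDerivation Y → IsNCDerivation Z →
      ω (update X k (Y + Z)) = ω (update X k Y) + ω (update X k Z)

def IsCentralLinearOnDerivations (ω : (Fin p → (B →ₗ[ℂ] B)) → B) : Prop :=
  ∀ X : Fin p → (B →ₗ[ℂ] B), (∀ k, IsNCDerivation (X k)) →
    ∀ (k : Fin p) (f : B), (∀ b, f * b = b * f) →
      ω (update X k (mulLeft ℂ f ∘ₗ X k)) = f * ω X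

theorem IsNCDerivation.mulLeft_comp {f : B} (hf : ∀ b, f * b = b * f) {X : B →ₗ[ℂ] B}
    (hX : IsNCDerivation X) : IsNCDerivation (mulLeft ℂ f ∘ₗ X) := by
  intro a b
  simp only [LinearMap.comp_apply, mulLeft_apply, hX a b, mul_add, ← mul_assoc, hf a]

theorem IsCentralLinearOnDerivations.map_piecewise_mulLeft_comp
    {ω : (Fin p → (B →ₗ[ℂ] B)) → B} (hω : IsCentralLinearOnDerivations ω)
    {f : B} (hf : ∀ b, f * b = b * f) {X : Fin p → (B →ₗ[ℂ] B)}
    (hX : ∀ k, IsNCDerivation (X k)) (s : Finset (Fin p)) :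
    ω (s.piecewise (fun k => mulLeft ℂ f ∘ₗ X k) X) = f ^ s.card * ω X := by
  induction s using Finset.induction_on with
  | empty => simp
  | insert a s ha ih =>
    have hXs : ∀ k, IsNCDerivation (s.piecewise (fun k => mulLeft ℂ f ∘ₗ X k) X k) :=
      fun k => s.piecewise_cases (π := fun _ => B →ₗ[ℂ] B) _ _ IsNCDerivation
        ((hX k).mulLeft_comp hf) (hX k)
    rw [Finset.piecewise_insert, ← s.piecewise_eq_of_notMem (fun k => mulLeft ℂ f ∘ₗ X k) X ha,
      hω _ hXs a f hf, ih, Finset.card_insert_of_notMem ha, pow_succ', mul_assoc]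

theorem IsCentralLinearOnDerivations.map_mulLeft_comp
    {ω : (Fin p → (B →ₗ[ℂ] B)) → B} (hω : IsCentralLinearOnDerivations ω)
    {f : B} (hf : ∀ b, f * b = b * f) {X : Fin p → (B →ₗ[ℂ] B)}
    (hX : ∀ k, IsNCDerivation (X k)) :
    ω (fun k => mulLeft ℂ f ∘ₗ X k) = f ^ p * ω X := by
  simpa using hω.map_piecewise_mulLeft_comp hf hX Finset.univ

end Forms

theorem Pi.single_mul_comm_of_mul_comm {I : Type*} [DecidableEq I] {A : I → Type*}
    [∀ i, MulZeroClass (A i)] {i : I} {g : A i} (hg : ∀ b, g * b = b * g) (b : (j : I) → A j) :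
    Pi.single i g * b = b * Pi.single i g := by
  rw [← Pi.single_mul_left, ← Pi.single_mul_right, hg]

section Pi

variable {I : Type*} [DecidableEq I] {A : I → Type*} [∀ i, Ring (A i)] [∀ i, Algebra ℂ (A i)]

noncomputable def extendAt (i : I) (Y : A i →ₗ[ℂ] A i) : ((j : I) → A j) →ₗ[ℂ] ((j : I) → A j) :=
  single ℂ A i ∘ₗ Y ∘ₗ proj i

@[simp]
theorem extendAt_apply (i : I) (Y : A i →ₗ[ℂ] A i) (a : (j : I) → A j) :
    extendAt i Y a = Pi.single i (Y (a i)) :=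
  rfl

theorem extendAt_add (i : I) (Y Z : A i →ₗ[ℂ] A i) :
    extendAt i (Y + Z) = extendAt i Y + extendAt i Z := by
  simp only [extendAt, add_comp, comp_add]

theorem IsNCDerivation.extendAt {i : I} {Y : A i →ₗ[ℂ] A i} (hY : IsNCDerivation Y) :
    IsNCDerivation (extendAt i Y) := by
  intro a b
  simp only [extendAt_apply, Pi.mul_apply, hY (a i) (b i), Pi.single_add, Pi.single_mul_right,
    Pi.single_mul_left]

theorem mulLeft_single_comp_extendAt (i : I) (g : A i) (Y : A i →ₗ[ℂ] A i) :
    mulLeft ℂ (Pi.single i g) ∘ₗ extendAt i Y = extendAt i (mulLeft ℂ g ∘ₗ Y) := by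
  ext a : 1
  simp [← Pi.single_mul]

theorem mulLeft_single_one_comp {i : I} {X : ((j : I) → A j) →ₗ[ℂ] ((j : I) → A j)}
    {Y : A i →ₗ[ℂ] A i} (hXY : ∀ a, X a i = Y (a i)) :
    mulLeft ℂ (Pi.single i 1) ∘ₗ X = extendAt i Y := by
  ext a : 1
  rw [LinearMap.comp_apply, mulLeft_apply, extendAt_apply, ← hXY, ← Pi.single_mul_left, one_mul]

variable {p : ℕ} {ω : (Fin p → (((j : I) → A j) →ₗ[ℂ] ((j : I) → A j))) → ((j : I) → A j)}

variable (ω) in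
noncomputable def componentForm (i : I) (Y : Fin p → (A i →ₗ[ℂ] A i)) : A i :=
  ω (extendAt i ∘ Y) i

theorem IsAntisymmOnDerivations.componentForm (hω : IsAntisymmOnDerivations ω) (i : I) :
    IsAntisymmOnDerivations (componentForm ω i) :=
  fun _ hY k l hkl => congrFun (hω _ (fun k => (hY k).extendAt) k l hkl) i

theorem IsAdditiveOnDerivations.componentForm (hω : IsAdditiveOnDerivations ω) (i : I) :
    IsAdditiveOnDerivations (componentForm ω i) := by
  intro Y hY k Z W hZ hW
  simp only [_root_.componentForm, comp_update, extendAt_add]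
  exact congrFun (hω _ (fun k => (hY k).extendAt) k _ _ hZ.extendAt hW.extendAt) i

theorem IsCentralLinearOnDerivations.componentForm (hω : IsCentralLinearOnDerivations ω) (i : I) :
    IsCentralLinearOnDerivations (componentForm ω i) := by
  intro Y hY k g hg
  have h := congrFun (hω _ (fun k => (hY k).extendAt) k _ (Pi.single_mul_comm_of_mul_comm hg)) i
  simp only [_root_.componentForm, comp_update, ← mulLeft_single_comp_extendAt]
  rwa [Pi.mul_apply, Pi.single_eq_same] at h

theorem IsCentralLinearOnDerivations.apply_eq_componentForm (hω : IsCentralLinearOnDerivations ω)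
    {X : Fin p → (((j : I) → A j) →ₗ[ℂ] ((j : I) → A j))} (hX : ∀ k, IsNCDerivation (X k))
    {i : I} {Y : Fin p → (A i →ₗ[ℂ] A i)} (hXY : ∀ k a, X k a i = Y k (a i)) :
    ω X i = _root_.componentForm ω i Y := by
  have h := hω.map_mulLeft_comp (Pi.single_mul_comm_of_mul_comm (i := i) (Commute.one_left ·)) hX
  simp only [mulLeft_single_one_comp (hXY _)] at h
  calc ω X i = ((Pi.single i 1 : (j : I) → A j) ^ p * ω X) i := by simp
    _ = _root_.componentForm ω i Y := by rw [← h]; rfl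

end Pi

theorem forms_pi_decomposition_general {I : Type*} (A : I → Type*)
    [∀ i, Ring (A i)] [∀ i, Algebra ℂ (A i)] (p : ℕ)
    (ω : (Fin p → (((i : I) → A i) →ₗ[ℂ] ((i : I) → A i))) → ((i : I) → A i))
    (hanti : ∀ (X : Fin p → (((i : I) → A i) →ₗ[ℂ] ((i : I) → A i))),
      (∀ k, IsNCDerivation (X k)) → ∀ k l : Fin p, k ≠ l →
        ω (fun t => X (Equiv.swap k l t)) = - ω X)
    (hadd : ∀ (X : Fin p → (((i : I) → A i) →ₗ[ℂ] ((i : I) → A i))),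
      (∀ k, IsNCDerivation (X k)) →
      ∀ (k : Fin p) (Y Z : ((i : I) → A i) →ₗ[ℂ] ((i : I) → A i)),
        IsNCDerivation Y → IsNCDerivation Z →
        ω (Function.update X k (Y + Z)) =
          ω (Function.update X k Y) + ω (Function.update X k Z))
    (hsmul : ∀ (X : Fin p → (((i : I) → A i) →ₗ[ℂ] ((i : I) → A i))),
      (∀ k, IsNCDerivation (X k)) →
      ∀ (k : Fin p) (f : (i : I) → A i), (∀ b, f * b = b * f) →
        ω (Function.update X k ((LinearMap.mulLeft ℂ f) ∘ₗ X k)) = f * ω X) :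
    ∀ i : I, ∃ ωc : (Fin p → (A i →ₗ[ℂ] A i)) → A i,
      (∀ (Y : Fin p → (A i →ₗ[ℂ] A i)), (∀ k, IsNCDerivation (Y k)) →
        ∀ k l : Fin p, k ≠ l → ωc (fun t => Y (Equiv.swap k l t)) = - ωc Y) ∧
      (∀ (Y : Fin p → (A i →ₗ[ℂ] A i)), (∀ k, IsNCDerivation (Y k)) →
        ∀ (k : Fin p) (Z W : A i →ₗ[ℂ] A i), IsNCDerivation Z → IsNCDerivation W →
          ωc (Function.update Y k (Z + W)) =
            ωc (Function.update Y k Z) + ωc (Function.update Y k W)) ∧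
      (∀ (Y : Fin p → (A i →ₗ[ℂ] A i)), (∀ k, IsNCDerivation (Y k)) →
        ∀ (k : Fin p) (g : A i), (∀ b, g * b = b * g) →
          ωc (Function.update Y k ((LinearMap.mulLeft ℂ g) ∘ₗ Y k)) = g * ωc Y) ∧
      (∀ (X : Fin p → (((i : I) → A i) →ₗ[ℂ] ((i : I) → A i))),
        (∀ k, IsNCDerivation (X k)) →
        ∀ (Y : Fin p → (A i →ₗ[ℂ] A i)), (∀ k, IsNCDerivation (Y k)) →
          (∀ (k : Fin p) (a : (i : I) → A i), X k a i = Y k (a i)) →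
          ω X i = ωc Y) := by
  classical
  intro i
  exact ⟨componentForm ω i,
    IsAntisymmOnDerivations.componentForm hanti i,
    IsAdditiveOnDerivations.componentForm hadd i,
    IsCentralLinearOnDerivations.componentForm hsmul i,
    fun _ hX _ _ hXY => IsCentralLinearOnDerivations.apply_eq_componentForm hsmul hX hXY⟩

/-- Decomposition of derivation-based `p`-forms on a finite product of
unital associative ℂ-algebras: every antisymmetric, argumentwise additive and
`Z(A)`-multilinear map on `p`-tuples of derivations of `A = Π i, A i` decomposes
componentwise into such maps on the factors. -/
theorem forms_pi_decomposition {I : Type*} [Fintype I] (A : I → Type*)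
    [∀ i, Ring (A i)] [∀ i, Algebra ℂ (A i)] (p : ℕ) (hp : 1 ≤ p)
    (ω : (Fin p → (((i : I) → A i) →ₗ[ℂ] ((i : I) → A i))) → ((i : I) → A i))
    (hanti : ∀ (X : Fin p → (((i : I) → A i) →ₗ[ℂ] ((i : I) → A i))),
      (∀ k, IsNCDerivation (X k)) → ∀ k l : Fin p, k ≠ l →
        ω (fun t => X (Equiv.swap k l t)) = - ω X)
    (hadd : ∀ (X : Fin p → (((i : I) → A i) →ₗ[ℂ] ((i : I) → A i))),
      (∀ k, IsNCDerivation (X k)) →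
      ∀ (k : Fin p) (Y Z : ((i : I) → A i) →ₗ[ℂ] ((i : I) → A i)),
        IsNCDerivation Y → IsNCDerivation Z →
        ω (Function.update X k (Y + Z)) =
          ω (Function.update X k Y) + ω (Function.update X k Z))
    (hsmul : ∀ (X : Fin p → (((i : I) → A i) →ₗ[ℂ] ((i : I) → A i))),
      (∀ k, IsNCDerivation (X k)) →
      ∀ (k : Fin p) (f : (i : I) → A i), (∀ b, f * b = b * f) →
        ω (Function.update X k ((LinearMap.mulLeft ℂ f) ∘ₗ X k)) = f * ω X) :
    ∀ i : I, ∃ ωc : (Fin p → (A i →ₗ[ℂ] A i)) → A i,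
      (∀ (Y : Fin p → (A i →ₗ[ℂ] A i)), (∀ k, IsNCDerivation (Y k)) →
        ∀ k l : Fin p, k ≠ l → ωc (fun t => Y (Equiv.swap k l t)) = - ωc Y) ∧
      (∀ (Y : Fin p → (A i →ₗ[ℂ] A i)), (∀ k, IsNCDerivation (Y k)) →
        ∀ (k : Fin p) (Z W : A i →ₗ[ℂ] A i), IsNCDerivation Z → IsNCDerivation W →
          ωc (Function.update Y k (Z + W)) =
            ωc (Function.update Y k Z) + ωc (Function.update Y k W)) ∧
      (∀ (Y : Fin p → (A i →ₗ[ℂ] A i)), (∀ k, IsNCDerivation (Y k)) →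
        ∀ (k : Fin p) (g : A i), (∀ b, g * b = b * g) →
          ωc (Function.update Y k ((LinearMap.mulLeft ℂ g) ∘ₗ Y k)) = g * ωc Y) ∧
      (∀ (X : Fin p → (((i : I) → A i) →ₗ[ℂ] ((i : I) → A i))),
        (∀ k, IsNCDerivation (X k)) →
        ∀ (Y : Fin p → (A i →ₗ[ℂ] A i)), (∀ k, IsNCDerivation (Y k)) →
          (∀ (k : Fin p) (a : (i : I) → A i), X k a i = Y k (a i)) →
          ω X i = ωc Y) :=
  forms_pi_decomposition_general A p ω hanti hadd hsmul
end

section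
/- Let (A_i)_{i∈I} be a finite family of unital associative ℂ-algebras, and for each i let M_i be a left A_i-module; set A = Π_{i∈I} A_i and M = Π_{i∈I} M_i with componentwise module structure. Let ∇ assign to each derivation X of A a ℂ-linear map ∇_X : M → M such that ∇_{X+Y} = ∇_X + ∇_Y, ∇_{f•X}(e) = f·∇_X(e) for every central f ∈ Z(A) (where f•X : a ↦ f·X(a)), and ∇_X(a·e) = X(a)·e + a·∇_X(e) for all a ∈ A and e ∈ M. Then for every i ∈ I there exists an assignment ∇^i of a ℂ-linear map ∇^i_{Y} : M_i → M_i to each derivation Y of A_i, satisfying the same three axioms over A_i, such that (∇_X(e))_i = ∇^i_{(X)_i}(e_i) for every derivation X of A and every e ∈ M, where (X)_i is the i-th component derivation of X characterized by (X(a))_i = (X)_i(a_i). -/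
/-- A noncommutative connection on the product module `Π i, M i` over the
product algebra `Π i, A i` decomposes componentwise into connections on the factors. -/
theorem connection_pi_decomposition {I : Type*} [Fintype I] (A : I → Type*)
    [∀ i, Ring (A i)] [∀ i, Algebra ℂ (A i)]
    (M : I → Type*) [∀ i, AddCommGroup (M i)] [∀ i, Module ℂ (M i)]
    [∀ i, Module (A i) (M i)] [∀ i, IsScalarTower ℂ (A i) (M i)]
    (nabla : (((i : I) → A i) →ₗ[ℂ] ((i : I) → A i)) →
             (((i : I) → M i) →ₗ[ℂ] ((i : I) → M i)))
    (hadd : ∀ X Y, IsNCDerivation X → IsNCDerivation Y →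
      nabla (X + Y) = nabla X + nabla Y)
    (hcentral : ∀ X, IsNCDerivation X → ∀ f : (i : I) → A i, (∀ b, f * b = b * f) →
      ∀ e : (i : I) → M i, nabla ((LinearMap.mulLeft ℂ f) ∘ₗ X) e = f • nabla X e)
    (hleibniz : ∀ X, IsNCDerivation X → ∀ (a : (i : I) → A i) (e : (i : I) → M i),
      nabla X (a • e) = X a • e + a • nabla X e) :
    ∀ i : I, ∃ D : (A i →ₗ[ℂ] A i) → (M i →ₗ[ℂ] M i),
      (∀ Y Z, IsNCDerivation Y → IsNCDerivation Z → D (Y + Z) = D Y + D Z) ∧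
      (∀ Y, IsNCDerivation Y → ∀ g : A i, (∀ b, g * b = b * g) →
        ∀ e : M i, D ((LinearMap.mulLeft ℂ g) ∘ₗ Y) e = g • D Y e) ∧
      (∀ Y, IsNCDerivation Y → ∀ (a : A i) (e : M i),
        D Y (a • e) = Y a • e + a • D Y e) ∧
      (∀ X, IsNCDerivation X → ∀ Y : A i →ₗ[ℂ] A i, IsNCDerivation Y →
        (∀ a : (j : I) → A j, X a i = Y (a i)) →
        ∀ e : (j : I) → M j, nabla X e i = D Y (e i)) := by
  classical
  intro i
  -- the central idempotent supported at `i`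
  set f : (j : I) → A j := Pi.single i (1 : A i) with hf
  have hfc : ∀ b, f * b = b * f := by
    intro b; funext j
    by_cases h : j = i
    · subst h; simp [hf, Pi.mul_apply]
    · simp [hf, Pi.mul_apply, Pi.single_eq_of_ne h]
  -- lifting a derivation of `A i` to the product algebra
  let L : (A i →ₗ[ℂ] A i) → (((j : I) → A j) →ₗ[ℂ] ((j : I) → A j)) :=
    fun Y => (LinearMap.single ℂ A i) ∘ₗ Y ∘ₗ (LinearMap.proj i)
  have hLapp : ∀ Y a, L Y a = Pi.single i (Y (a i)) := fun _ _ => rfl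
  have hLder : ∀ Y : A i →ₗ[ℂ] A i, IsNCDerivation Y → IsNCDerivation (L Y) := by
    intro Y hY a b
    funext j
    by_cases h : j = i
    · subst h
      simp only [hLapp, Pi.add_apply, Pi.mul_apply, Pi.single_eq_same]
      exact hY _ _
    · simp [hLapp, Pi.mul_apply, Pi.add_apply, Pi.single_eq_of_ne h]
  -- the component connection
  let D : (A i →ₗ[ℂ] A i) → (M i →ₗ[ℂ] M i) :=
    fun Y => (LinearMap.proj i) ∘ₗ nabla (L Y) ∘ₗ (LinearMap.single ℂ M i)
  have hDapp : ∀ Y m, D Y m = nabla (L Y) (Pi.single i m) i := fun _ _ => rfl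
  -- the `i`-th component of `nabla X e` vanishes when `e i = 0`
  have hdep : ∀ X, IsNCDerivation X → ∀ e : (j : I) → M j, e i = 0 →
      nabla X e i = 0 := by
    intro X hX e he
    have h1 : (1 - f) • e = e := by
      funext j
      by_cases h : j = i
      · subst h; simp [hf, he, Pi.smul_apply']
      · simp [hf, Pi.smul_apply', Pi.single_eq_of_ne h]
    have h2 := hleibniz X hX (1 - f) e
    rw [h1] at h2
    have h3 := congrFun h2 i
    simpa [hf, Pi.smul_apply', he] using h3
  have hdep' : ∀ X, IsNCDerivation X → ∀ e : (j : I) → M j,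
      nabla X e i = nabla X (Pi.single i (e i)) i := by
    intro X hX e
    have h0 : (e - Pi.single i (e i)) i = 0 := by simp
    have h1 := hdep X hX _ h0
    rw [map_sub, Pi.sub_apply, sub_eq_zero] at h1
    exact h1
  -- the `i`-th component of `nabla X e` only depends on the `i`-th component of `X`
  have hagree : ∀ X : ((j : I) → A j) →ₗ[ℂ] ((j : I) → A j), IsNCDerivation X →
      ∀ Y : A i →ₗ[ℂ] A i, (∀ a : (j : I) → A j, X a i = Y (a i)) →
      ∀ e, nabla X e i = nabla (L Y) e i := by
    intro X hX Y hXY e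
    have hcomp : (LinearMap.mulLeft ℂ f) ∘ₗ X = L Y := by
      apply LinearMap.ext; intro a
      funext j
      by_cases h : j = i
      · subst h
        simp [hLapp, hf, Pi.mul_apply, hXY a]
      · simp [hLapp, hf, Pi.mul_apply, Pi.single_eq_of_ne h]
    have h1 := hcentral X hX f hfc e
    rw [hcomp] at h1
    have h2 := congrFun h1 i
    simp [hf, Pi.smul_apply'] at h2
    exact h2.symm
  refine ⟨D, ?_, ?_, ?_, ?_⟩
  · -- additivity
    intro Y Z hY hZ
    have hL : L (Y + Z) = L Y + L Z := by
      apply LinearMap.ext; intro a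
      simp [hLapp, Pi.single_add]
    apply LinearMap.ext; intro m
    rw [hDapp, hL, hadd _ _ (hLder Y hY) (hLder Z hZ)]
    simp [hDapp]
  · -- centrality
    intro Y hY g hg e
    have hgc : ∀ b, Pi.single i g * b = b * Pi.single i g := by
      intro b; funext j
      by_cases h : j = i
      · subst h; simp [Pi.mul_apply, hg]
      · simp [Pi.mul_apply, Pi.single_eq_of_ne h]
    have hcomp : L ((LinearMap.mulLeft ℂ g) ∘ₗ Y)
        = (LinearMap.mulLeft ℂ (Pi.single i g)) ∘ₗ L Y := by
      apply LinearMap.ext; intro a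
      funext j
      by_cases h : j = i
      · subst h; simp [hLapp, Pi.mul_apply]
      · simp [hLapp, Pi.mul_apply, Pi.single_eq_of_ne h]
    have h1 := hcentral (L Y) (hLder Y hY) (Pi.single i g) hgc (Pi.single i e)
    rw [← hcomp] at h1
    have h2 := congrFun h1 i
    simpa [hDapp, Pi.smul_apply'] using h2
  · -- Leibniz rule
    intro Y hY a e
    have hsp : (Pi.single i (a • e) : (j : I) → M j)
        = (Pi.single i a : (j : I) → A j) • Pi.single i e := by
      funext j
      by_cases h : j = i
      · subst h; simp [Pi.smul_apply']
      · simp [Pi.smul_apply', Pi.single_eq_of_ne h]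
    have h1 := hleibniz (L Y) (hLder Y hY) (Pi.single i a) (Pi.single i e)
    have h2 := congrFun h1 i
    rw [hDapp, hsp, h2]
    simp [hLapp, Pi.smul_apply', hDapp]
  · -- compatibility
    intro X hX Y hY hXY e
    rw [hagree X hX Y hXY e, hdep' (L Y) (hLder Y hY) e, hDapp]
end

section
/- Let ι_1 : Fin n_1 → Fin m, …, ι_r : Fin n_r → Fin m be injective maps with pairwise disjoint ranges, let u_k ∈ M_{n_k}(ℂ) be unitary matrices (u_k·u_k* = u_k*·u_k = 1_{n_k}), and set v := Σ_{k=1}^r Φ_{ι_k}(u_k) + (1_m − Σ_{k=1}^r Φ_{ι_k}(1_{n_k})). Then for every k ∈ {1,…,r} and all a, E ∈ M_{n_k}(ℂ): v*·Φ_{ι_k}(a)·v − v*·(Φ_{ι_k}(E)·v − v·Φ_{ι_k}(E)) = Φ_{ι_k}(u_k*·a·u_k − u_k*·(E·u_k − u_k·E)). Consequently, if a connection 1-form η on M_m(ℂ) is φ-compatible with a connection 1-form ω = (ω_k) on Π_k M_{n_k}(ℂ) (meaning η evaluated on the derivation ad_{Φ_{ι_k}(E)} equals Φ_{ι_k}(ω_k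 evaluated on ad_E)), then the gauge-transformed 1-form η^v is φ-compatible with ω^{(u_1,…,u_r)}. -/
/-!
Writing `Φ_ι(a) = P a Pᴴ` with `P` the isometry `e_k ↦ e_{ι k}`, injectivity of `ι` gives
`Pᴴ P = 1`, so `Φ_ι` is multiplicative, and disjointness of ranges gives `Pᴴ Q = 0`, so distinct
corners annihilate each other. Hence `v` and `vᴴ` act on the `k`-th corner, from either side,
as `u_k` and `u_kᴴ` do, and the gauge transform by `v` of an embedded quantity only sees `u_k`.
-/

open Matrix

/-- The corner embedding `Φ_ι : M_n(ℂ) → M_m(ℂ)` associated to an injective map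
`ι : Fin n → Fin m`: the `(ι k, ι l)` entry of `cornerEmb ι a` is `a k l` and all other
entries are `0`. -/
noncomputable def cornerEmb {n m : ℕ} (ι : Fin n → Fin m) (a : Matrix (Fin n) (Fin n) ℂ) :
    Matrix (Fin m) (Fin m) ℂ :=
  ∑ k : Fin n, ∑ l : Fin n, a k l • Matrix.single (ι k) (ι l) 1

section CornerEmbedding

variable {m n n' : ℕ} (ι : Fin n → Fin m) (κ : Fin n' → Fin m)

def cornerInclusion : Matrix (Fin m) (Fin n) ℂ :=
  (1 : Matrix (Fin m) (Fin m) ℂ).submatrix id ι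

lemma cornerInclusion_mul_single_mul_conjTranspose (k l : Fin n) (c : ℂ) :
    cornerInclusion ι * single k l c * (cornerInclusion ι)ᴴ = single (ι k) (ι l) c := by
  ext i j
  simp only [cornerInclusion, conjTranspose_submatrix, conjTranspose_one, mul_apply,
    submatrix_apply, one_apply, id_eq, single_apply, ite_and, mul_ite, ite_mul, one_mul, zero_mul,
    mul_zero, Finset.sum_ite_eq, Finset.mem_univ, ↓reduceIte, mul_one]
  rw [Finset.sum_eq_single l (fun x _ hx => by simp [Ne.symm hx]) (by simp)]
  grind

lemma cornerEmb_eq_mul (a : Matrix (Fin n) (Fin n) ℂ) :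
    cornerEmb ι a = cornerInclusion ι * a * (cornerInclusion ι)ᴴ := by
  conv_rhs => rw [matrix_eq_sum_single a]
  simp only [cornerEmb, Matrix.mul_sum, Matrix.sum_mul,
    cornerInclusion_mul_single_mul_conjTranspose, smul_single, smul_eq_mul, mul_one]

lemma cornerInclusion_conjTranspose_mul :
    (cornerInclusion ι)ᴴ * cornerInclusion κ = (1 : Matrix (Fin m) (Fin m) ℂ).submatrix ι κ := by
  rw [cornerInclusion, cornerInclusion, conjTranspose_submatrix, conjTranspose_one,
    ← submatrix_mul _ _ _ _ _ Function.bijective_id, Matrix.one_mul]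

lemma cornerInclusion_conjTranspose_mul_self (hι : Function.Injective ι) :
    (cornerInclusion ι)ᴴ * cornerInclusion ι = 1 := by
  rw [cornerInclusion_conjTranspose_mul, submatrix_one _ hι]

lemma cornerInclusion_conjTranspose_mul_eq_zero (h : Disjoint (Set.range ι) (Set.range κ)) :
    (cornerInclusion ι)ᴴ * cornerInclusion κ = 0 := by
  rw [cornerInclusion_conjTranspose_mul]
  ext k l
  exact one_apply_ne fun hkl => Set.disjoint_left.mp h ⟨k, rfl⟩ ⟨l, hkl.symm⟩

lemma cornerEmb_mul (hι : Function.Injective ι) (a b : Matrix (Fin n) (Fin n) ℂ) :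
    cornerEmb ι a * cornerEmb ι b = cornerEmb ι (a * b) := by
  simp only [cornerEmb_eq_mul, Matrix.mul_assoc]
  rw [← Matrix.mul_assoc (cornerInclusion ι)ᴴ, cornerInclusion_conjTranspose_mul_self ι hι,
    Matrix.one_mul]

lemma cornerEmb_mul_of_disjoint (h : Disjoint (Set.range ι) (Set.range κ))
    (a : Matrix (Fin n) (Fin n) ℂ) (b : Matrix (Fin n') (Fin n') ℂ) :
    cornerEmb ι a * cornerEmb κ b = 0 := by
  simp only [cornerEmb_eq_mul, Matrix.mul_assoc]
  rw [← Matrix.mul_assoc (cornerInclusion ι)ᴴ, cornerInclusion_conjTranspose_mul_eq_zero ι κ h,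
    Matrix.zero_mul, Matrix.mul_zero, Matrix.mul_zero]

lemma cornerEmb_conjTranspose (a : Matrix (Fin n) (Fin n) ℂ) :
    (cornerEmb ι a)ᴴ = cornerEmb ι aᴴ := by
  simp only [cornerEmb_eq_mul, conjTranspose_mul, conjTranspose_conjTranspose, Matrix.mul_assoc]

lemma cornerEmb_sub (a b : Matrix (Fin n) (Fin n) ℂ) :
    cornerEmb ι (a - b) = cornerEmb ι a - cornerEmb ι b := by
  simp only [cornerEmb_eq_mul, Matrix.mul_sub, Matrix.sub_mul]

end CornerEmbedding

/-- `ω^u(ad_E)` for `a = ω(ad_E)`. -/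
def gaugeTransform {A : Type*} [Ring A] [Star A] (u a E : A) : A :=
  star u * a * u - star u * (E * u - u * E)

section CornerLift

variable {r m : ℕ} {n : Fin r → ℕ} (ι : (k : Fin r) → Fin (n k) → Fin m)

/-- The paper's `ṽ(x₁, …, x_r)`: `x k` on the `k`-th corner, the identity off all corners. -/
noncomputable def cornerLift (x : (k : Fin r) → Matrix (Fin (n k)) (Fin (n k)) ℂ) :
    Matrix (Fin m) (Fin m) ℂ :=
  (∑ k, cornerEmb (ι k) (x k)) + (1 - ∑ k, cornerEmb (ι k) 1)

lemma cornerLift_conjTranspose (x : (k : Fin r) → Matrix (Fin (n k)) (Fin (n k)) ℂ) :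
    (cornerLift ι x)ᴴ = cornerLift ι fun k => (x k)ᴴ := by
  simp only [cornerLift, conjTranspose_add, conjTranspose_sub, conjTranspose_one,
    conjTranspose_sum, cornerEmb_conjTranspose]

variable {ι} (hinj : ∀ k, Function.Injective (ι k))
  (hdisj : ∀ k l, k ≠ l → Disjoint (Set.range (ι k)) (Set.range (ι l)))
  (x : (k : Fin r) → Matrix (Fin (n k)) (Fin (n k)) ℂ) (k : Fin r)
include hinj hdisj

lemma cornerEmb_mul_sum_cornerEmb (b : Matrix (Fin (n k)) (Fin (n k)) ℂ) :
    cornerEmb (ι k) b * ∑ l, cornerEmb (ι l) (x l) = cornerEmb (ι k) (b * x k) := by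
  rw [Finset.mul_sum, Finset.sum_eq_single k
    (fun l _ hl => cornerEmb_mul_of_disjoint _ _ (hdisj k l hl.symm) _ _) (by simp),
    cornerEmb_mul _ (hinj k)]

lemma cornerEmb_mul_cornerLift (b : Matrix (Fin (n k)) (Fin (n k)) ℂ) :
    cornerEmb (ι k) b * cornerLift ι x = cornerEmb (ι k) (b * x k) := by
  rw [cornerLift, Matrix.mul_add, Matrix.mul_sub, Matrix.mul_one,
    cornerEmb_mul_sum_cornerEmb hinj hdisj, cornerEmb_mul_sum_cornerEmb hinj hdisj,
    Matrix.mul_one, sub_self, add_zero]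

lemma cornerLift_mul_cornerEmb (b : Matrix (Fin (n k)) (Fin (n k)) ℂ) :
    cornerLift ι x * cornerEmb (ι k) b = cornerEmb (ι k) (x k * b) := by
  rw [← conjTranspose_conjTranspose (cornerLift ι x * _), conjTranspose_mul,
    cornerEmb_conjTranspose, cornerLift_conjTranspose, cornerEmb_mul_cornerLift hinj hdisj,
    cornerEmb_conjTranspose, conjTranspose_mul, conjTranspose_conjTranspose,
    conjTranspose_conjTranspose]

lemma gaugeTransform_cornerLift_cornerEmb (a E : Matrix (Fin (n k)) (Fin (n k)) ℂ) :
    gaugeTransform (cornerLift ι x) (cornerEmb (ι k) a) (cornerEmb (ι k) E) =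
      cornerEmb (ι k) (gaugeTransform (x k) a E) := by
  simp only [gaugeTransform, star_eq_conjTranspose, cornerLift_conjTranspose,
    cornerLift_mul_cornerEmb hinj hdisj, cornerEmb_mul_cornerLift hinj hdisj,
    ← cornerEmb_sub]

end CornerLift

theorem gauge_transform_phi_compatible_general {r m : ℕ} {n : Fin r → ℕ}
    (ι : (k : Fin r) → Fin (n k) → Fin m)
    (hinj : ∀ k, Function.Injective (ι k))
    (hdisj : ∀ k l, k ≠ l → Disjoint (Set.range (ι k)) (Set.range (ι l)))
    (u : (k : Fin r) → Matrix (Fin (n k)) (Fin (n k)) ℂ)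
    (v : Matrix (Fin m) (Fin m) ℂ)
    (hv : v = (∑ k, cornerEmb (ι k) (u k)) +
        (1 - ∑ k, cornerEmb (ι k) (1 : Matrix (Fin (n k)) (Fin (n k)) ℂ))) :
    (∀ (k : Fin r) (a E : Matrix (Fin (n k)) (Fin (n k)) ℂ),
      vᴴ * cornerEmb (ι k) a * v -
          vᴴ * (cornerEmb (ι k) E * v - v * cornerEmb (ι k) E) =
        cornerEmb (ι k)
          ((u k)ᴴ * a * u k - (u k)ᴴ * (E * u k - u k * E))) ∧
    (∀ (η : Matrix (Fin m) (Fin m) ℂ →ₗ[ℂ] Matrix (Fin m) (Fin m) ℂ)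
       (ω : (k : Fin r) →
         (Matrix (Fin (n k)) (Fin (n k)) ℂ →ₗ[ℂ] Matrix (Fin (n k)) (Fin (n k)) ℂ)),
      (∀ (k : Fin r) (E : Matrix (Fin (n k)) (Fin (n k)) ℂ), E.trace = 0 →
        η (cornerEmb (ι k) E) = cornerEmb (ι k) (ω k E)) →
      ∀ (k : Fin r) (E : Matrix (Fin (n k)) (Fin (n k)) ℂ), E.trace = 0 →
        vᴴ * η (cornerEmb (ι k) E) * v -
            vᴴ * (cornerEmb (ι k) E * v - v * cornerEmb (ι k) E) =
          cornerEmb (ι k)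
            ((u k)ᴴ * ω k E * u k - (u k)ᴴ * (E * u k - u k * E))) := by
  subst hv
  have gauge_compat := gaugeTransform_cornerLift_cornerEmb hinj hdisj u
  exact ⟨gauge_compat, fun η ω hcompat k E hE => hcompat k E hE ▸ gauge_compat k (ω k E) E⟩

/-- Gauge transformation by the lifted unitary `v = ṽ(u₁,…,u_r)` is
compatible with the corner embeddings: the gauge transform of an embedded quantity is
the embedding of the gauge transform.  Consequently, if a connection 1-form `η` on
`M_m(ℂ)` is `φ`-compatible with `ω = (ω_k)`, then `η^v` is `φ`-compatible with
`ω^{(u₁,…,u_r)}`. -/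
theorem gauge_transform_phi_compatible {r m : ℕ} {n : Fin r → ℕ}
    (ι : (k : Fin r) → Fin (n k) → Fin m)
    (hinj : ∀ k, Function.Injective (ι k))
    (hdisj : ∀ k l, k ≠ l → Disjoint (Set.range (ι k)) (Set.range (ι l)))
    (u : (k : Fin r) → Matrix (Fin (n k)) (Fin (n k)) ℂ)
    (hu : ∀ k, u k * (u k)ᴴ = 1 ∧ (u k)ᴴ * u k = 1)
    (v : Matrix (Fin m) (Fin m) ℂ)
    (hv : v = (∑ k, cornerEmb (ι k) (u k)) +
        (1 - ∑ k, cornerEmb (ι k) (1 : Matrix (Fin (n k)) (Fin (n k)) ℂ))) :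
    (∀ (k : Fin r) (a E : Matrix (Fin (n k)) (Fin (n k)) ℂ),
      vᴴ * cornerEmb (ι k) a * v -
          vᴴ * (cornerEmb (ι k) E * v - v * cornerEmb (ι k) E) =
        cornerEmb (ι k)
          ((u k)ᴴ * a * u k - (u k)ᴴ * (E * u k - u k * E))) ∧
    (∀ (η : Matrix (Fin m) (Fin m) ℂ →ₗ[ℂ] Matrix (Fin m) (Fin m) ℂ)
       (ω : (k : Fin r) →
         (Matrix (Fin (n k)) (Fin (n k)) ℂ →ₗ[ℂ] Matrix (Fin (n k)) (Fin (n k)) ℂ)),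
      (∀ (k : Fin r) (E : Matrix (Fin (n k)) (Fin (n k)) ℂ), E.trace = 0 →
        η (cornerEmb (ι k) E) = cornerEmb (ι k) (ω k E)) →
      ∀ (k : Fin r) (E : Matrix (Fin (n k)) (Fin (n k)) ℂ), E.trace = 0 →
        vᴴ * η (cornerEmb (ι k) E) * v -
            vᴴ * (cornerEmb (ι k) E * v - v * cornerEmb (ι k) E) =
          cornerEmb (ι k)
            ((u k)ᴴ * ω k E * u k - (u k)ᴴ * (E * u k - u k * E))) :=
  gauge_transform_phi_compatible_general ι hinj hdisj u v hv
end
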